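/- Under Assumptions A1–A7 (with AXR) and range(T) = Λ, let λ ∈ Λ* be the solution of (I − X^⊤ S) λ = d and let γ > 0 be a constant with ‖(I − X^⊤ S) μ‖_{M^{-1}} ≥ γ ‖μ‖_{M^{-1}} for all μ ∈ Λ*. Then for any damping parameter β ∈ (0, 1), the Robin–Schwarz iterates converge linearly: ‖λ^(n+1) − λ‖_{M^{-1}} ≤ ρ ‖λ^(n) − λ‖_{M^{-1}} with ρ := √(1 − β(1 − β)γ²) < 1, hence ‖λ^(n) − λ‖_{M^{-1}} ≤ ρⁿ ‖λ^(0) − λ‖_{M^{-1}}; moreover there is a constant C such that ‖u^(n) − R û‖_U ≤ C ρⁿ ‖λ^(0) − λ‖_{M^{-1}}, where û is the unique solution of Â û = f̂. -/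

import Mathlib

/-!
With `eₙ = λ⁽ⁿ⁾ − λ` the iteration reads `eₙ₊₁ = (1 − β) eₙ + β X^⊤S eₙ`. In the `M⁻¹`-norm
`X^⊤` is an isometry (A4, AXR, `X² = I`) and `S` is a contraction: with `w = Ã⁻¹ T^⊤ μ`,
`‖S μ‖² = ‖μ‖² − 4 Re (ᾱ ⟨A w, w̄⟩)`, and the last term is non-negative by A7. The identity
`‖(1 − β) x + β y‖² = (1 − β) ‖x‖² + β ‖y‖² − β (1 − β) ‖x − y‖²` applied to `y = X^⊤S x`,
together with the inf-sup bound on `x − X^⊤S x`, gives the factor `ρ² = 1 − β (1 − β) γ²`.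

For the primal iterates, applying the involution `X^⊤` to the Schur complement equation shows
`X T ũ = T ũ` for `ũ = Ã⁻¹ (f + T^⊤ λ)`, so `ũ ∈ range R` by A2; testing `Ã ũ = f + T^⊤ λ`
against `range R` gives `Â R⁻¹ ũ = f̂`, hence `ũ = R û`. Then `u⁽ⁿ⁾ − R û = Ã⁻¹ T^⊤ M (M⁻¹ eₙ)`
is bounded by a multiple of `‖eₙ‖_{M⁻¹}`.
-/

/-- The transpose (dual map) `B^⊤ : Y* → X*` of a bounded linear operator `B : X → Y`. -/
noncomputable def trOp {X Y : Type*} [NormedAddCommGroup X] [NormedSpace ℂ X]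
    [NormedAddCommGroup Y] [NormedSpace ℂ Y] (B : X →L[ℂ] Y) :
    (Y →L[ℂ] ℂ) →L[ℂ] (X →L[ℂ] ℂ) :=
  (ContinuousLinearMap.compL ℂ X Y ℂ).flip B

/-- `B` (an operator into the dual) is *real-valued* with respect to the conjugation `cU`:
`⟨B v̄, w⟩ = conj ⟨B v, w̄⟩`. -/
def IsRealForm {U : Type*} [NormedAddCommGroup U] [NormedSpace ℂ U]
    (cU : U →SL[starRingEnd ℂ] U) (B : U →L[ℂ] (U →L[ℂ] ℂ)) : Prop :=
  ∀ v w, B (cU v) w = star (B v (cU w))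

/-- `B` is *symmetric*: `⟨B v, w⟩ = ⟨B w, v⟩` (bilinear duality pairing). -/
def IsSymForm {U : Type*} [NormedAddCommGroup U] [NormedSpace ℂ U]
    (B : U →L[ℂ] (U →L[ℂ] ℂ)) : Prop :=
  ∀ v w, B v w = B w v

/-- `B` is *non-negative*: `⟨B v, v̄⟩ ≥ 0` (in particular real). -/
def IsNonnegForm {U : Type*} [NormedAddCommGroup U] [NormedSpace ℂ U]
    (cU : U →SL[starRingEnd ℂ] U) (B : U →L[ℂ] (U →L[ℂ] ℂ)) : Prop :=
  ∀ v, (B v (cU v)).im = 0 ∧ 0 ≤ (B v (cU v)).re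

/-- real-valued, symmetric and non-negative operator. -/
def IsRealSymNonneg {U : Type*} [NormedAddCommGroup U] [NormedSpace ℂ U]
    (cU : U →SL[starRingEnd ℂ] U) (B : U →L[ℂ] (U →L[ℂ] ℂ)) : Prop :=
  IsRealForm cU B ∧ IsSymForm B ∧ IsNonnegForm cU B

/-- **Assumption A7**: either the coercive case (`α = 1`, `A` real, symmetric, non-negative)
or the wave propagation case (`α = i`, `A = A₀ + i A₁ − A₂` with real, symmetric,
non-negative parts). -/
def AssumptionA7 {U : Type*} [NormedAddCommGroup U] [NormedSpace ℂ U]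
    (α : ℂ) (cU : U →SL[starRingEnd ℂ] U) (A : U →L[ℂ] (U →L[ℂ] ℂ)) : Prop :=
  (α = 1 ∧ IsRealSymNonneg cU A) ∨
  (α = Complex.I ∧ ∃ A0 A1 A2 : U →L[ℂ] (U →L[ℂ] ℂ),
    A = A0 + Complex.I • A1 - A2 ∧
    IsRealSymNonneg cU A0 ∧ IsRealSymNonneg cU A1 ∧ IsRealSymNonneg cU A2)

/-- The squared `M`-norm `‖l‖²_M = ⟨M l, l̄⟩` on `Λ`. -/
noncomputable def sqM {Lam : Type*} [NormedAddCommGroup Lam] [NormedSpace ℂ Lam]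
    (cL : Lam →SL[starRingEnd ℂ] Lam) (M : Lam →L[ℂ] (Lam →L[ℂ] ℂ)) (l : Lam) : ℝ :=
  (M l (cL l)).re

/-- The squared `M⁻¹`-norm `‖μ‖²_{M⁻¹} = ⟨M⁻¹ μ, μ̄⟩` on `Λ*` (here `Minv = M⁻¹`). -/
noncomputable def sqMinv {Lam : Type*} [NormedAddCommGroup Lam] [NormedSpace ℂ Lam]
    (cL : Lam →SL[starRingEnd ℂ] Lam) (Minv : (Lam →L[ℂ] ℂ) →L[ℂ] Lam)
    (μ : Lam →L[ℂ] ℂ) : ℝ :=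
  (μ (cL (Minv μ))).re

/-- The scattering operator in its simplified form (valid under A4),
`S = −I + 2α M T Ã⁻¹ T^⊤`, with `Atinv = Ã⁻¹ = (A + α T^⊤ M T)⁻¹`. -/
noncomputable def scatOp {U Lam : Type*}
    [NormedAddCommGroup U] [NormedSpace ℂ U] [NormedAddCommGroup Lam] [NormedSpace ℂ Lam]
    (T : U →L[ℂ] Lam) (M : Lam →L[ℂ] (Lam →L[ℂ] ℂ))
    (Atinv : (U →L[ℂ] ℂ) →L[ℂ] U) (α : ℂ) :
    (Lam →L[ℂ] ℂ) →L[ℂ] (Lam →L[ℂ] ℂ) :=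
  -(ContinuousLinearMap.id ℂ (Lam →L[ℂ] ℂ)) +
    (2 * α) • ((M.comp T).comp (Atinv.comp (trOp T)))

open ContinuousLinearMap

section Transpose

variable {E F : Type*} [NormedAddCommGroup E] [NormedSpace ℂ E]
  [NormedAddCommGroup F] [NormedSpace ℂ F]

@[simp]
lemma trOp_apply (B : E →L[ℂ] F) (μ : F →L[ℂ] ℂ) (v : E) : trOp B μ v = μ (B v) := rfl

lemma trOp_trOp_of_comp_self_eq_id {X : E →L[ℂ] E}
    (hX2 : X.comp X = ContinuousLinearMap.id ℂ E) (μ : E →L[ℂ] ℂ) : trOp X (trOp X μ) = μ := by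
  ext v
  rw [trOp_apply, trOp_apply, ← comp_apply X X, hX2, id_apply]

end Transpose

lemma damped_step_sub_of_fixedPoint {E : Type*} [AddCommGroup E] [Module ℂ E]
    [TopologicalSpace E] (K : E →L[ℂ] E)
    {d x : E} (hx : x - K x = d) (β : ℝ) (y : E) :
    y + (β : ℂ) • (d - (y - K y)) - x = ((1 - β : ℝ) : ℂ) • (y - x) + (β : ℂ) • K (y - x) := by
  subst hx
  rw [map_sub]
  push_cast
  module

section Forms

variable {Lam : Type*} [NormedAddCommGroup Lam] [NormedSpace ℂ Lam]
  {cL : Lam →SL[starRingEnd ℂ] Lam} {M : Lam →L[ℂ] (Lam →L[ℂ] ℂ)}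
  {Minv : (Lam →L[ℂ] ℂ) →L[ℂ] Lam}

lemma IsRealForm.apply_conj_comm (hMreal : IsRealForm cL M) (hMsym : IsSymForm M)
    (x y : Lam) : M y (cL x) = star (M x (cL y)) := by
  rw [hMsym, hMreal]

lemma IsRealForm.sqM_sub (hMreal : IsRealForm cL M) (hMsym : IsSymForm M) (x y : Lam) :
    sqM cL M (x - y) = sqM cL M x - 2 * (M x (cL y)).re + sqM cL M y := by
  simp only [sqM, map_sub, sub_apply, Complex.sub_re, hMreal.apply_conj_comm hMsym x y,
    Complex.star_def, Complex.conj_re]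
  ring

lemma sqMinv_eq_sqM (hMinv_r : ∀ μ, M (Minv μ) = μ) (μ : Lam →L[ℂ] ℂ) :
    sqMinv cL Minv μ = sqM cL M (Minv μ) := by
  rw [sqMinv, sqM, hMinv_r]

lemma sqMinv_apply_eq_sqM (hMinv_l : ∀ l, Minv (M l) = l) (l : Lam) :
    sqMinv cL Minv (M l) = sqM cL M l := by
  rw [sqMinv, sqM, hMinv_l]

lemma sqMinv_neg (μ : Lam →L[ℂ] ℂ) : sqMinv cL Minv (-μ) = sqMinv cL Minv μ := by
  simp only [sqMinv, map_neg, neg_apply, neg_neg]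

lemma sqMinv_convex_comb (β : ℝ) (x y : Lam →L[ℂ] ℂ) :
    sqMinv cL Minv (((1 - β : ℝ) : ℂ) • x + (β : ℂ) • y) =
      (1 - β) * sqMinv cL Minv x + β * sqMinv cL Minv y -
        β * (1 - β) * sqMinv cL Minv (x - y) := by
  simp only [sqMinv, map_add, map_sub, map_smulₛₗ, add_apply, sub_apply, smul_apply,
    RingHom.id_apply, Complex.conj_ofReal, smul_eq_mul, Complex.add_re, Complex.sub_re,
    Complex.mul_re, Complex.ofReal_re, Complex.ofReal_im]
  ring

lemma sqrt_sqMinv_damped_step_sub_le (hq : ∀ μ, 0 ≤ sqMinv cL Minv μ)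
    (K : (Lam →L[ℂ] ℂ) →L[ℂ] (Lam →L[ℂ] ℂ))
    (hK : ∀ μ, sqMinv cL Minv (K μ) ≤ sqMinv cL Minv μ) {γ : ℝ} (hγ : 0 ≤ γ)
    (hinfsup : ∀ μ, γ * √(sqMinv cL Minv μ) ≤ √(sqMinv cL Minv (μ - K μ)))
    {β : ℝ} (hβ0 : 0 ≤ β) (hβ1 : β ≤ 1) {d x : Lam →L[ℂ] ℂ} (hx : x - K x = d)
    (y : Lam →L[ℂ] ℂ) :
    √(sqMinv cL Minv (y + (β : ℂ) • (d - (y - K y)) - x)) ≤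
      √(1 - β * (1 - β) * γ ^ 2) * √(sqMinv cL Minv (y - x)) := by
  have hinfsup_sq : γ ^ 2 * sqMinv cL Minv (y - x) ≤ sqMinv cL Minv (y - x - K (y - x)) := by
    have h := (Real.le_sqrt (by positivity) (hq _)).1 (hinfsup (y - x))
    rwa [mul_pow, Real.sq_sqrt (hq _)] at h
  rw [damped_step_sub_of_fixedPoint K hx, ← Real.sqrt_mul' _ (hq _), sqMinv_convex_comb]
  apply Real.sqrt_le_sqrt
  nlinarith [mul_le_mul_of_nonneg_left (hK (y - x)) hβ0,
    mul_le_mul_of_nonneg_left hinfsup_sq (mul_nonneg hβ0 (sub_nonneg.2 hβ1))]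

variable {cM : ℝ}

lemma mul_norm_sq_le_sqMinv (hMinv_r : ∀ μ, M (Minv μ) = μ)
    (hMlow : ∀ l, cM * ‖l‖ ^ 2 ≤ sqM cL M l) (μ : Lam →L[ℂ] ℂ) :
    cM * ‖Minv μ‖ ^ 2 ≤ sqMinv cL Minv μ := by
  rw [sqMinv_eq_sqM hMinv_r]
  exact hMlow _

lemma sqMinv_nonneg (hcM : 0 ≤ cM) (hMinv_r : ∀ μ, M (Minv μ) = μ)
    (hMlow : ∀ l, cM * ‖l‖ ^ 2 ≤ sqM cL M l) (μ : Lam →L[ℂ] ℂ) :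
    0 ≤ sqMinv cL Minv μ :=
  (by positivity : 0 ≤ cM * ‖Minv μ‖ ^ 2).trans (mul_norm_sq_le_sqMinv hMinv_r hMlow μ)

lemma norm_apply_Minv_le {E : Type*} [NormedAddCommGroup E] [NormedSpace ℂ E]
    (K : Lam →L[ℂ] E) (hcM : 0 < cM) (hMinv_r : ∀ μ, M (Minv μ) = μ)
    (hMlow : ∀ l, cM * ‖l‖ ^ 2 ≤ sqM cL M l) (μ : Lam →L[ℂ] ℂ) :
    ‖K (Minv μ)‖ ≤ ‖K‖ / √cM * √(sqMinv cL Minv μ) := by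
  have hMinv : √cM * ‖Minv μ‖ ≤ √(sqMinv cL Minv μ) := by
    rw [← Real.sqrt_sq (norm_nonneg (Minv μ)), ← Real.sqrt_mul hcM.le]
    exact Real.sqrt_le_sqrt (mul_norm_sq_le_sqMinv hMinv_r hMlow μ)
  calc ‖K (Minv μ)‖ ≤ ‖K‖ * ‖Minv μ‖ := K.le_opNorm _
    _ = ‖K‖ / √cM * (√cM * ‖Minv μ‖) := by field_simp
    _ ≤ ‖K‖ / √cM * √(sqMinv cL Minv μ) := by gcongr

end Forms

section Exchange

variable {Lam : Type*} [NormedAddCommGroup Lam] [NormedSpace ℂ Lam]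
  {cL : Lam →SL[starRingEnd ℂ] Lam} {M : Lam →L[ℂ] (Lam →L[ℂ] ℂ)}
  {Minv : (Lam →L[ℂ] ℂ) →L[ℂ] Lam} {X : Lam →L[ℂ] Lam}

lemma trOp_apply_M_apply (hX2 : X.comp X = ContinuousLinearMap.id ℂ Lam)
    (hA4 : (trOp X).comp (M.comp X) = M) (l : Lam) : trOp X (M l) = M (X l) := by
  simpa only [comp_apply, ← comp_apply X X, hX2, id_apply] using
    congrArg (fun B => B (X l)) hA4

lemma sqMinv_trOp (hXreal : ∀ l, X (cL l) = cL (X l))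
    (hX2 : X.comp X = ContinuousLinearMap.id ℂ Lam) (hA4 : (trOp X).comp (M.comp X) = M)
    (hMinv_l : ∀ l, Minv (M l) = l) (hMinv_r : ∀ μ, M (Minv μ) = μ) (μ : Lam →L[ℂ] ℂ) :
    sqMinv cL Minv (trOp X μ) = sqMinv cL Minv μ := by
  obtain ⟨l, rfl⟩ : ∃ l, M l = μ := ⟨Minv μ, hMinv_r μ⟩
  rw [trOp_apply_M_apply hX2 hA4, sqMinv_apply_eq_sqM hMinv_l, sqMinv_apply_eq_sqM hMinv_l,
    sqM, sqM, ← hXreal, ← trOp_apply]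
  exact congrArg (fun μ => (μ (cL l)).re) (DFunLike.congr_fun hA4 l)

end Exchange

section Scattering

variable {U Lam : Type*} [NormedAddCommGroup U] [NormedSpace ℂ U]
  [NormedAddCommGroup Lam] [NormedSpace ℂ Lam]
  {cU : U →SL[starRingEnd ℂ] U} {cL : Lam →SL[starRingEnd ℂ] Lam} {T : U →L[ℂ] Lam}
  {A : U →L[ℂ] (U →L[ℂ] ℂ)} {α : ℂ} {M : Lam →L[ℂ] (Lam →L[ℂ] ℂ)}
  {Minv : (Lam →L[ℂ] ℂ) →L[ℂ] Lam} {Atinv : (U →L[ℂ] ℂ) →L[ℂ] U}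

lemma AssumptionA7.re_conj_mul_nonneg (hA7 : AssumptionA7 α cU A) (w : U) :
    0 ≤ (star α * A w (cU w)).re := by
  rcases hA7 with ⟨rfl, -, -, hA⟩ | ⟨rfl, A0, A1, A2, rfl, ⟨-, -, hA0⟩, ⟨-, -, hA1⟩, ⟨-, -, hA2⟩⟩
  · simpa using (hA w).2
  · have e0 := (hA0 w).1
    have e1 := (hA1 w).2
    have e2 := (hA2 w).1
    simp only [sub_apply, add_apply, smul_apply, smul_eq_mul, Complex.star_def,
      Complex.conj_I, Complex.mul_re, Complex.neg_re, Complex.neg_im, Complex.I_re,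
      Complex.I_im, Complex.sub_re, Complex.add_re, Complex.sub_im, Complex.add_im,
      Complex.mul_im] at e0 e2 ⊢
    nlinarith

lemma scatOp_apply (μ : Lam →L[ℂ] ℂ) :
    scatOp T M Atinv α μ = -μ + (2 * α) • M (T (Atinv (trOp T μ))) := rfl

lemma apply_conj_T_Atinv (hTreal : ∀ v, T (cU v) = cL (T v))
    (hAt_r : ∀ g, (A + α • ((trOp T).comp (M.comp T))) (Atinv g) = g) (μ : Lam →L[ℂ] ℂ) :
    μ (cL (T (Atinv (trOp T μ)))) =
      A (Atinv (trOp T μ)) (cU (Atinv (trOp T μ))) +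
        α * M (T (Atinv (trOp T μ))) (cL (T (Atinv (trOp T μ)))) := by
  have h := DFunLike.congr_fun (hAt_r (trOp T μ)) (cU (Atinv (trOp T μ)))
  simp only [add_apply, smul_apply, comp_apply, smul_eq_mul, trOp_apply, hTreal] at h
  exact h.symm

lemma sqMinv_scatOp (hTreal : ∀ v, T (cU v) = cL (T v)) (hMreal : IsRealForm cL M)
    (hMsym : IsSymForm M) (hMinv_l : ∀ l, Minv (M l) = l) (hMinv_r : ∀ μ, M (Minv μ) = μ)
    (hAt_r : ∀ g, (A + α • ((trOp T).comp (M.comp T))) (Atinv g) = g) (μ : Lam →L[ℂ] ℂ) :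
    sqMinv cL Minv (scatOp T M Atinv α μ) =
      sqMinv cL Minv μ - 4 * (star α * A (Atinv (trOp T μ)) (cU (Atinv (trOp T μ)))).re := by
  have henergy := apply_conj_T_Atinv hTreal hAt_r μ
  set w := Atinv (trOp T μ)
  obtain ⟨a, rfl⟩ : ∃ a, M a = μ := ⟨Minv μ, hMinv_r μ⟩
  have hS : scatOp T M Atinv α (M a) = -M (a - (2 * α) • T w) := by
    rw [scatOp_apply, map_sub, map_smul]
    abel
  rw [hS, sqMinv_neg, sqMinv_apply_eq_sqM hMinv_l, sqMinv_apply_eq_sqM hMinv_l,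
    hMreal.sqM_sub hMsym]
  simp only [sqM, map_smul, map_smulₛₗ, smul_apply, smul_eq_mul, henergy]
  simp only [Complex.star_def, Complex.mul_re, Complex.add_re, Complex.mul_im, Complex.add_im,
    Complex.conj_re, Complex.conj_im, Complex.re_ofNat, Complex.im_ofNat]
  ring

lemma sqMinv_scatOp_le (hTreal : ∀ v, T (cU v) = cL (T v)) (hMreal : IsRealForm cL M)
    (hMsym : IsSymForm M) (hMinv_l : ∀ l, Minv (M l) = l) (hMinv_r : ∀ μ, M (Minv μ) = μ)
    (hAt_r : ∀ g, (A + α • ((trOp T).comp (M.comp T))) (Atinv g) = g)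
    (hA7 : AssumptionA7 α cU A) (μ : Lam →L[ℂ] ℂ) :
    sqMinv cL Minv (scatOp T M Atinv α μ) ≤ sqMinv cL Minv μ := by
  rw [sqMinv_scatOp hTreal hMreal hMsym hMinv_l hMinv_r hAt_r]
  linarith [hA7.re_conj_mul_nonneg (Atinv (trOp T μ))]

lemma Atinv_add_trOp_sub (hMinv_r : ∀ μ, M (Minv μ) = μ) (f : U →L[ℂ] ℂ) (μ ν : Lam →L[ℂ] ℂ) :
    Atinv (f + trOp T μ) - Atinv (f + trOp T ν) =
      (Atinv.comp ((trOp T).comp M)) (Minv (μ - ν)) := by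
  rw [comp_apply, comp_apply, hMinv_r, ← map_sub, map_sub (trOp T)]
  congr 1
  abel

end Scattering

section SchurSolution

variable {Uhat U Lam : Type*} [NormedAddCommGroup Uhat] [NormedSpace ℂ Uhat]
  [NormedAddCommGroup U] [NormedSpace ℂ U] [NormedAddCommGroup Lam] [NormedSpace ℂ Lam]
  {R : Uhat →L[ℂ] U} {T : U →L[ℂ] Lam} {X : Lam →L[ℂ] Lam} {A : U →L[ℂ] (U →L[ℂ] ℂ)}
  {f : U →L[ℂ] ℂ} {α : ℂ} {M : Lam →L[ℂ] (Lam →L[ℂ] ℂ)} {Minv : (Lam →L[ℂ] ℂ) →L[ℂ] Lam}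
  {Atinv : (U →L[ℂ] ℂ) →L[ℂ] U} {μ : Lam →L[ℂ] ℂ}

lemma mem_range_iff_X_T_eq
    (hA2 : LinearMap.range (R : Uhat →ₗ[ℂ] U) =
      LinearMap.ker ((ContinuousLinearMap.id ℂ Lam - X).comp T : U →ₗ[ℂ] Lam)) (u : U) :
    u ∈ LinearMap.range (R : Uhat →ₗ[ℂ] U) ↔ X (T u) = T u := by
  rw [hA2, LinearMap.mem_ker, coe_coe, comp_apply, sub_apply, id_apply, sub_eq_zero, eq_comm]

lemma add_trOp_eq_of_schur
    (hμ : μ - trOp X (scatOp T M Atinv α μ) = (2 * α) • trOp X (M (T (Atinv f)))) :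
    μ + trOp X μ = (2 * α) • trOp X (M (T (Atinv (f + trOp T μ)))) := by
  rw [scatOp_apply, map_add, map_neg, map_smul] at hμ
  rw [map_add Atinv, map_add T, map_add M, map_add (trOp X), smul_add, ← hμ]
  abel

lemma add_trOp_eq_M_of_schur (hX2 : X.comp X = ContinuousLinearMap.id ℂ Lam)
    (hμ : μ - trOp X (scatOp T M Atinv α μ) = (2 * α) • trOp X (M (T (Atinv f)))) :
    μ + trOp X μ = (2 * α) • M (T (Atinv (f + trOp T μ))) := by
  have h := congrArg (trOp X) (add_trOp_eq_of_schur hμ)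
  rwa [map_add, map_smul, trOp_trOp_of_comp_self_eq_id hX2,
    trOp_trOp_of_comp_self_eq_id hX2, add_comm] at h

lemma X_T_eq_of_schur (hα : α ≠ 0) (hX2 : X.comp X = ContinuousLinearMap.id ℂ Lam)
    (hA4 : (trOp X).comp (M.comp X) = M) (hMinv_l : ∀ l, Minv (M l) = l)
    (hμ : μ - trOp X (scatOp T M Atinv α μ) = (2 * α) • trOp X (M (T (Atinv f)))) :
    X (T (Atinv (f + trOp T μ))) = T (Atinv (f + trOp T μ)) := by
  have h := (add_trOp_eq_of_schur hμ).symm.trans (add_trOp_eq_M_of_schur hX2 hμ)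
  replace h := smul_right_injective (Lam →L[ℂ] ℂ) (mul_ne_zero two_ne_zero hα) h
  rw [trOp_apply_M_apply hX2 hA4] at h
  simpa only [hMinv_l] using congrArg Minv h

lemma trOp_R_A_eq_of_schur (hX2 : X.comp X = ContinuousLinearMap.id ℂ Lam)
    (hA2 : LinearMap.range (R : Uhat →ₗ[ℂ] U) =
      LinearMap.ker ((ContinuousLinearMap.id ℂ Lam - X).comp T : U →ₗ[ℂ] Lam))
    (hAt_r : ∀ g, (A + α • ((trOp T).comp (M.comp T))) (Atinv g) = g)
    (hμ : μ - trOp X (scatOp T M Atinv α μ) = (2 * α) • trOp X (M (T (Atinv f)))) :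
    trOp R (A (Atinv (f + trOp T μ))) = trOp R f := by
  ext v
  have hXv : X (T (R v)) = T (R v) := (mem_range_iff_X_T_eq hA2 _).1 ⟨v, rfl⟩
  have hA := DFunLike.congr_fun (hAt_r (f + trOp T μ)) (R v)
  have hμv := DFunLike.congr_fun (add_trOp_eq_M_of_schur hX2 hμ) (T (R v))
  simp only [add_apply, smul_apply, comp_apply, smul_eq_mul, trOp_apply, hXv] at hA hμv ⊢
  linear_combination hA + hμv / 2

lemma Atinv_eq_R_of_schur (hα : α ≠ 0) (hX2 : X.comp X = ContinuousLinearMap.id ℂ Lam)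
    (hA2 : LinearMap.range (R : Uhat →ₗ[ℂ] U) =
      LinearMap.ker ((ContinuousLinearMap.id ℂ Lam - X).comp T : U →ₗ[ℂ] Lam))
    (hA4 : (trOp X).comp (M.comp X) = M) (hMinv_l : ∀ l, Minv (M l) = l)
    (hAt_r : ∀ g, (A + α • ((trOp T).comp (M.comp T))) (Atinv g) = g)
    {Ahatinv : (Uhat →L[ℂ] ℂ) →L[ℂ] Uhat}
    (hAhat_left : ∀ v, Ahatinv (trOp R (A (R v))) = v)
    {uhat : Uhat} (huhat : trOp R (A (R uhat)) = trOp R f)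
    (hμ : μ - trOp X (scatOp T M Atinv α μ) = (2 * α) • trOp X (M (T (Atinv f)))) :
    Atinv (f + trOp T μ) = R uhat := by
  obtain ⟨v, hv⟩ := (mem_range_iff_X_T_eq hA2 _).2 (X_T_eq_of_schur hα hX2 hA4 hMinv_l hμ)
  change R v = _ at hv
  have hAv : trOp R (A (R v)) = trOp R (A (R uhat)) := by
    rw [hv, trOp_R_A_eq_of_schur hX2 hA2 hAt_r hμ, huhat]
  rw [← hv, ← hAhat_left v, hAv, hAhat_left]

end SchurSolution

theorem statement17_general
    {Uhat U Lam : Type*}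
    [NormedAddCommGroup Uhat] [InnerProductSpace ℂ Uhat]
    [NormedAddCommGroup U] [InnerProductSpace ℂ U]
    [NormedAddCommGroup Lam] [InnerProductSpace ℂ Lam]
    (cU : U →SL[starRingEnd ℂ] U)
    (cL : Lam →SL[starRingEnd ℂ] Lam)
    (R : Uhat →L[ℂ] U) (T : U →L[ℂ] Lam) (X : Lam →L[ℂ] Lam)
    (hTreal : ∀ v, T (cU v) = cL (T v))
    -- Assumption AXR
    (hXreal : ∀ l, X (cL l) = cL (X l))
    -- Assumption A2
    (hX2 : X.comp X = ContinuousLinearMap.id ℂ Lam)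
    (hA2 : LinearMap.range (R : Uhat →ₗ[ℂ] U) = LinearMap.ker ((ContinuousLinearMap.id ℂ Lam - X).comp T : U →ₗ[ℂ] Lam))
    (A : U →L[ℂ] (U →L[ℂ] ℂ)) (f : U →L[ℂ] ℂ)
    -- `Â = R^⊤ A R` bijective with bounded inverse
    (Ahatinv : (Uhat →L[ℂ] ℂ) →L[ℂ] Uhat)
    (hAhat_left : ∀ uhat : Uhat, Ahatinv (trOp R (A (R uhat))) = uhat)
    (α : ℂ) (hα : α ≠ 0)
    (M : Lam →L[ℂ] (Lam →L[ℂ] ℂ))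
    -- Assumption A4
    (hA4 : (trOp X).comp (M.comp X) = M)
    -- Assumption A6 together with A3 (under A4)
    (hMreal : IsRealForm cL M) (hMsym : IsSymForm M)
    (cM : ℝ) (hcM : 0 < cM)
    (hMlow : ∀ l : Lam, (M l (cL l)).im = 0 ∧ cM * ‖l‖ ^ 2 ≤ (M l (cL l)).re)
    (Minv : (Lam →L[ℂ] ℂ) →L[ℂ] Lam)
    (hMinv_l : ∀ l : Lam, Minv (M l) = l) (hMinv_r : ∀ μ : Lam →L[ℂ] ℂ, M (Minv μ) = μ)
    -- Assumption A5
    (Atinv : (U →L[ℂ] ℂ) →L[ℂ] U)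
    (hAt_r : ∀ g : U →L[ℂ] ℂ, (A + α • ((trOp T).comp (M.comp T))) (Atinv g) = g)
    -- Assumption A7
    (hA7 : AssumptionA7 α cU A)
    -- `û` is the solution of `Â û = f̂`
    (uhat : Uhat) (huhat : trOp R (A (R uhat)) = trOp R f)
    -- the inf-sup constant
    (γ : ℝ) (hγ : 0 < γ)
    (hinfsup : ∀ μ : Lam →L[ℂ] ℂ,
      γ * Real.sqrt (sqMinv cL Minv μ) ≤
        Real.sqrt (sqMinv cL Minv (μ - trOp X (scatOp T M Atinv α μ))))
    -- `λ` solves the Schur complement equation `(I − X^⊤S)λ = d`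
    (lamsol : Lam →L[ℂ] ℂ)
    (hlamsol : lamsol - trOp X (scatOp T M Atinv α lamsol) =
      (2 * α) • trOp X (M (T (Atinv f))))
    -- the damped Robin–Schwarz iteration, damping parameter β ∈ (0, 1)
    (β : ℝ) (hβ0 : 0 < β) (hβ1 : β < 1)
    (lam : ℕ → (Lam →L[ℂ] ℂ))
    (hiter : ∀ n : ℕ, lam (n + 1) = lam n + (β : ℂ) •
      ((2 * α) • trOp X (M (T (Atinv f))) -
        (lam n - trOp X (scatOp T M Atinv α (lam n))))) :
    Real.sqrt (1 - β * (1 - β) * γ ^ 2) < 1 ∧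
    (∀ n : ℕ,
      Real.sqrt (sqMinv cL Minv (lam (n + 1) - lamsol)) ≤
        Real.sqrt (1 - β * (1 - β) * γ ^ 2) *
          Real.sqrt (sqMinv cL Minv (lam n - lamsol))) ∧
    (∀ n : ℕ,
      Real.sqrt (sqMinv cL Minv (lam n - lamsol)) ≤
        Real.sqrt (1 - β * (1 - β) * γ ^ 2) ^ n *
          Real.sqrt (sqMinv cL Minv (lam 0 - lamsol))) ∧
    (∃ C : ℝ, ∀ n : ℕ,
      ‖Atinv (f + trOp T (lam n)) - R uhat‖ ≤
        C * Real.sqrt (1 - β * (1 - β) * γ ^ 2) ^ n *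
          Real.sqrt (sqMinv cL Minv (lam 0 - lamsol))) := by
  have hMlow_sqM (l : Lam) : cM * ‖l‖ ^ 2 ≤ sqM cL M l := (hMlow l).2
  have hq := sqMinv_nonneg hcM.le hMinv_r hMlow_sqM
  set K := (trOp X).comp (scatOp T M Atinv α)
  have hK (μ : Lam →L[ℂ] ℂ) : sqMinv cL Minv (K μ) ≤ sqMinv cL Minv μ :=
    (sqMinv_trOp hXreal hX2 hA4 hMinv_l hMinv_r _).trans_le
      (sqMinv_scatOp_le hTreal hMreal hMsym hMinv_l hMinv_r hAt_r hA7 μ)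
  have hstep (n : ℕ) : √(sqMinv cL Minv (lam (n + 1) - lamsol)) ≤
      √(1 - β * (1 - β) * γ ^ 2) * √(sqMinv cL Minv (lam n - lamsol)) := by
    rw [hiter n]
    exact sqrt_sqMinv_damped_step_sub_le hq K hK hγ.le hinfsup hβ0.le hβ1.le hlamsol (lam n)
  have hgeo (n : ℕ) : √(sqMinv cL Minv (lam n - lamsol)) ≤
      √(1 - β * (1 - β) * γ ^ 2) ^ n * √(sqMinv cL Minv (lam 0 - lamsol)) :=
    le_geom (u := fun n => √(sqMinv cL Minv (lam n - lamsol))) (Real.sqrt_nonneg _) n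
      fun k _ => hstep k
  have hρ : √(1 - β * (1 - β) * γ ^ 2) < 1 := by
    have : 0 < β * (1 - β) * γ ^ 2 := by have := sub_pos.2 hβ1; positivity
    exact (Real.sqrt_lt' one_pos).2 (by linarith)
  set P := Atinv.comp ((trOp T).comp M)
  refine ⟨hρ, hstep, hgeo, ‖P‖ / √cM, fun n => ?_⟩
  rw [← Atinv_eq_R_of_schur hα hX2 hA2 hA4 hMinv_l hAt_r hAhat_left huhat hlamsol,
    Atinv_add_trOp_sub hMinv_r]
  calc ‖P (Minv (lam n - lamsol))‖
      ≤ ‖P‖ / √cM * √(sqMinv cL Minv (lam n - lamsol)) :=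
        norm_apply_Minv_le P hcM hMinv_r hMlow_sqM _
    _ ≤ _ := by rw [mul_assoc]; gcongr; exact hgeo n

/-- linear convergence with surjective traces: with `λ` the solution of
`(I − X^⊤S)λ = d` and `γ > 0` an inf-sup constant, the damped Robin–Schwarz iterates with
`β ∈ (0, 1)` converge linearly with rate `ρ = √(1 − β(1 − β)γ²) < 1`, and the primal
iterates converge linearly to `R û`. -/
theorem statement17
    {Uhat U Lam : Type*}
    [NormedAddCommGroup Uhat] [InnerProductSpace ℂ Uhat] [CompleteSpace Uhat]
    [NormedAddCommGroup U] [InnerProductSpace ℂ U] [CompleteSpace U]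
    [NormedAddCommGroup Lam] [InnerProductSpace ℂ Lam] [CompleteSpace Lam]
    (cUhat : Uhat →SL[starRingEnd ℂ] Uhat) (cU : U →SL[starRingEnd ℂ] U)
    (cL : Lam →SL[starRingEnd ℂ] Lam)
    (hcUhat : ∀ v, cUhat (cUhat v) = v) (hcU : ∀ v, cU (cU v) = v)
    (hcL : ∀ l, cL (cL l) = l)
    (hcUhat_iso : ∀ v, ‖cUhat v‖ = ‖v‖) (hcU_iso : ∀ v, ‖cU v‖ = ‖v‖)
    (hcL_iso : ∀ l, ‖cL l‖ = ‖l‖)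
    (R : Uhat →L[ℂ] U) (T : U →L[ℂ] Lam) (X : Lam →L[ℂ] Lam)
    (hRreal : ∀ v, R (cUhat v) = cU (R v))
    (hTreal : ∀ v, T (cU v) = cL (T v))
    -- Assumption AXR
    (hXreal : ∀ l, X (cL l) = cL (X l))
    -- Assumption A1
    (hRinj : LinearMap.ker (R : Uhat →ₗ[ℂ] U) = ⊥)
    (hRclosed : IsClosed (Set.range R))
    -- Assumption A2
    (hX2 : X.comp X = ContinuousLinearMap.id ℂ Lam)
    (hA2 : LinearMap.range (R : Uhat →ₗ[ℂ] U) = LinearMap.ker ((ContinuousLinearMap.id ℂ Lam - X).comp T : U →ₗ[ℂ] Lam))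
    (A : U →L[ℂ] (U →L[ℂ] ℂ)) (f : U →L[ℂ] ℂ)
    -- `Â = R^⊤ A R` bijective with bounded inverse
    (Ahatinv : (Uhat →L[ℂ] ℂ) →L[ℂ] Uhat)
    (hAhat_left : ∀ uhat : Uhat, Ahatinv (trOp R (A (R uhat))) = uhat)
    (hAhat_right : ∀ g : Uhat →L[ℂ] ℂ, trOp R (A (R (Ahatinv g))) = g)
    (α : ℂ) (hα : α ≠ 0)
    (M : Lam →L[ℂ] (Lam →L[ℂ] ℂ))
    -- Assumption A4
    (hA4 : (trOp X).comp (M.comp X) = M)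
    -- Assumption A6 together with A3 (under A4)
    (hMreal : IsRealForm cL M) (hMsym : IsSymForm M)
    (cM : ℝ) (hcM : 0 < cM)
    (hMlow : ∀ l : Lam, (M l (cL l)).im = 0 ∧ cM * ‖l‖ ^ 2 ≤ (M l (cL l)).re)
    (Minv : (Lam →L[ℂ] ℂ) →L[ℂ] Lam)
    (hMinv_l : ∀ l : Lam, Minv (M l) = l) (hMinv_r : ∀ μ : Lam →L[ℂ] ℂ, M (Minv μ) = μ)
    -- Assumption A5
    (Atinv : (U →L[ℂ] ℂ) →L[ℂ] U)
    (hAt_l : ∀ u : U, Atinv ((A + α • ((trOp T).comp (M.comp T))) u) = u)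
    (hAt_r : ∀ g : U →L[ℂ] ℂ, (A + α • ((trOp T).comp (M.comp T))) (Atinv g) = g)
    -- Assumption A7
    (hA7 : AssumptionA7 α cU A)
    -- surjectivity of the trace operator
    (hTsurj : LinearMap.range (T : U →ₗ[ℂ] Lam) = ⊤)
    -- `û` is the solution of `Â û = f̂`
    (uhat : Uhat) (huhat : trOp R (A (R uhat)) = trOp R f)
    -- the inf-sup constant
    (γ : ℝ) (hγ : 0 < γ)
    (hinfsup : ∀ μ : Lam →L[ℂ] ℂ,
      γ * Real.sqrt (sqMinv cL Minv μ) ≤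
        Real.sqrt (sqMinv cL Minv (μ - trOp X (scatOp T M Atinv α μ))))
    -- `λ` solves the Schur complement equation `(I − X^⊤S)λ = d`
    (lamsol : Lam →L[ℂ] ℂ)
    (hlamsol : lamsol - trOp X (scatOp T M Atinv α lamsol) =
      (2 * α) • trOp X (M (T (Atinv f))))
    -- the damped Robin–Schwarz iteration, damping parameter β ∈ (0, 1)
    (β : ℝ) (hβ0 : 0 < β) (hβ1 : β < 1)
    (lam : ℕ → (Lam →L[ℂ] ℂ))
    (hiter : ∀ n : ℕ, lam (n + 1) = lam n + (β : ℂ) •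
      ((2 * α) • trOp X (M (T (Atinv f))) -
        (lam n - trOp X (scatOp T M Atinv α (lam n))))) :
    Real.sqrt (1 - β * (1 - β) * γ ^ 2) < 1 ∧
    (∀ n : ℕ,
      Real.sqrt (sqMinv cL Minv (lam (n + 1) - lamsol)) ≤
        Real.sqrt (1 - β * (1 - β) * γ ^ 2) *
          Real.sqrt (sqMinv cL Minv (lam n - lamsol))) ∧
    (∀ n : ℕ,
      Real.sqrt (sqMinv cL Minv (lam n - lamsol)) ≤
        Real.sqrt (1 - β * (1 - β) * γ ^ 2) ^ n *
          Real.sqrt (sqMinv cL Minv (lam 0 - lamsol))) ∧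
    (∃ C : ℝ, ∀ n : ℕ,
      ‖Atinv (f + trOp T (lam n)) - R uhat‖ ≤
        C * Real.sqrt (1 - β * (1 - β) * γ ^ 2) ^ n *
          Real.sqrt (sqMinv cL Minv (lam 0 - lamsol))) :=
  statement17_general cU cL R T X hTreal hXreal hX2 hA2 A f Ahatinv hAhat_left α hα M hA4 hMreal
    hMsym cM hcM hMlow Minv hMinv_l hMinv_r Atinv hAt_r hA7 uhat huhat γ hγ hinfsup lamsol hlamsol β
    hβ0 hβ1 lam hiter
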